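/- Let G = (V,E) be a finite simple graph and let W ⊆ V be a clique of G with |W| ≥ 2. Then F_W := {x ∈ STAB(G) : x_W = 1} satisfies F_W ⊆ STAB(G|W) ⊆ STAB(G), where G|W is the clique projection of W. -/

import Mathlib

open Finset

variable {V : Type*}

/-- A stable (independent) set of a graph: pairwise non-adjacent vertices. -/
def IsStable (G : SimpleGraph V) (S : Finset V) : Prop :=
  ∀ u ∈ S, ∀ v ∈ S, ¬ G.Adj u v

/-- The characteristic vectors of stable sets of `G`. -/
def stableVecs [DecidableEq V] (G : SimpleGraph V) : Set (V → ℝ) :=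
  {x | ∃ S : Finset V, IsStable G S ∧ x = fun v => if v ∈ S then (1 : ℝ) else 0}

/-- The stable set polytope `STAB(G)`. -/
def STAB [DecidableEq V] (G : SimpleGraph V) : Set (V → ℝ) :=
  convexHull ℝ (stableVecs G)

/-- `x_W = ∑_{v ∈ W} x_v`. -/
def vsum (W : Finset V) (x : V → ℝ) : ℝ := ∑ v ∈ W, x v

/-- The clique projection `G|W`: add every non-edge `uv` with `W ⊆ N(u) ∪ N(v)`. -/
def cliqueProj (G : SimpleGraph V) (W : Finset V) : SimpleGraph V where
  Adj u v := G.Adj u v ∨ (u ≠ v ∧ ¬G.Adj u v ∧ ∀ w ∈ W, G.Adj w u ∨ G.Adj w v)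
  symm := by
    constructor
    rintro u v (h | ⟨hne, hna, h⟩)
    · exact Or.inl h.symm
    · exact Or.inr ⟨hne.symm, fun h' => hna h'.symm, fun w hw => (h w hw).symm⟩
  loopless := by
    constructor
    rintro u (h | ⟨hne, _, _⟩)
    · exact (G.ne_of_adj h) rfl
    · exact hne rfl

/-- Iterated projected graphs: `G_0 = G`, `G_t = G_{t-1} | W_t`. -/
def projSeq (G : SimpleGraph V) (W : ℕ → Finset V) : ℕ → SimpleGraph V
  | 0 => G
  | t + 1 => cliqueProj (projSeq G W t) (W (t + 1))

/-- `F_t = {x ∈ STAB(G) : x_{W_j} = 1, j = 1, …, t}`. -/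
def Fface [DecidableEq V] (G : SimpleGraph V) (W : ℕ → Finset V) (t : ℕ) : Set (V → ℝ) :=
  {x ∈ STAB G | ∀ j ∈ Finset.Icc 1 t, vsum (W j) x = 1}

/-- `α(G[H], c)`: the maximum `c`-weight of a stable set of `G` contained in `H`. -/
noncomputable def alphaW (G : SimpleGraph V) (H : Finset V) (c : V → ℝ) : ℝ :=
  sSup {r : ℝ | ∃ S : Finset V, S ⊆ H ∧ IsStable G S ∧ r = ∑ v ∈ S, c v}

/-- `α(G[H])`: the maximum cardinality of a stable set of `G` contained in `H`. -/
noncomputable def alphaOn (G : SimpleGraph V) (H : Finset V) : ℕ :=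
  sSup {k : ℕ | ∃ S : Finset V, S ⊆ H ∧ IsStable G S ∧ S.card = k}

/-- The stability number `α(G)`. -/
noncomputable def alphaNum [Fintype V] (G : SimpleGraph V) : ℕ :=
  sSup {k : ℕ | ∃ S : Finset V, IsStable G S ∧ S.card = k}

/-- `cᵀx`. -/
def dotp [Fintype V] (c x : V → ℝ) : ℝ := ∑ v, c v * x v

/-- The affine dimension of a set of points. -/
noncomputable def affDim (s : Set (V → ℝ)) : ℕ := Module.finrank ℝ (vectorSpan ℝ s)

/-- Strong hypertree (with hyperedges of size `k`). -/
inductive IsStrongHypertree [DecidableEq V] (k : ℕ) : Finset V → Finset (Finset V) → Prop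
  | base (V' : Finset V) : IsStrongHypertree k V' {V'}
  | step (V' : Finset V) (E : Finset (Finset V)) (v : V) (Wi : Finset V) :
      v ∈ V' → v ∈ Wi → Wi ∈ E →
      (∃ Wj ∈ E, Wj ≠ Wi ∧ (Wi ∩ Wj).card = k - 1) →
      IsStrongHypertree k (V'.erase v) (E.erase Wi) →
      IsStrongHypertree k V' E

/-- Condition (I): `|W_t| = k` and the subgraph of `G_{t-1}` induced by `W_1 ∪ ⋯ ∪ W_t`
is `k`-partite with stable vertex classes `V_t^1, …, V_t^k`. -/
def CondI [DecidableEq V] (G : SimpleGraph V) (W : ℕ → Finset V)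
    (Vc : ℕ → ℕ → Finset V) (k t : ℕ) : Prop :=
  (W t).card = k ∧
  (Finset.Icc 1 k).biUnion (Vc t) = (Finset.Icc 1 t).biUnion W ∧
  (∀ i ∈ Finset.Icc 1 k, ∀ j ∈ Finset.Icc 1 k, i ≠ j → Disjoint (Vc t i) (Vc t j)) ∧
  (∀ i ∈ Finset.Icc 1 k, ∀ u ∈ Vc t i, ∀ v ∈ Vc t i, ¬(projSeq G W (t - 1)).Adj u v)

/-- Condition (II): `T_t = (V_t, {W_1, …, W_t})` is a strong hypertree. -/
def CondII [DecidableEq V] (W : ℕ → Finset V) (Vc : ℕ → ℕ → Finset V) (k t : ℕ) : Prop :=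
  IsStrongHypertree k ((Finset.Icc 1 k).biUnion (Vc t)) ((Finset.Icc 1 t).image W)

/-- Condition (III): every `w ∉ V_t` misses some class `V_t^i` in `G_{t-1}`. -/
def CondIII [DecidableEq V] (G : SimpleGraph V) (W : ℕ → Finset V)
    (Vc : ℕ → ℕ → Finset V) (k t : ℕ) : Prop :=
  ∀ w : V, w ∉ (Finset.Icc 1 k).biUnion (Vc t) →
    ∃ i ∈ Finset.Icc 1 k, ∀ u ∈ Vc t i, ¬(projSeq G W (t - 1)).Adj w u

/-- Condition (IV). -/
def CondIV [Fintype V] [DecidableEq V] (G : SimpleGraph V) (W : ℕ → Finset V)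
    (Vc : ℕ → ℕ → Finset V) (k r : ℕ) : Prop :=
  ∀ i ∈ Finset.Icc 1 (k - 1), ∀ t ∈ Finset.Icc 1 r, ∀ v ∈ W t ∩ Vc t i,
    ∀ w ∈ Finset.univ \ (Finset.Icc 1 k).biUnion (Vc r),
      (∃ z ∈ Vc r i, (projSeq G W r).Adj z w) →
      (G.Adj v w ∨ ∃ t' ∈ Finset.Icc 1 r,
        (projSeq G W (t' - 1)).IsClique (W t : Set V) ∧
        W t ≠ W t' ∧ (W t ∩ W t').card = k - 1 ∧
        v ∉ W t' ∧ ∃ v' ∈ W t' ∩ Vc r i, (projSeq G W (t' - 1)).Adj v' w)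

/-- Condition (V): no vertex of `V_t^k` has a neighbor in `V_r^0` in the graph `G_r`. -/
def CondV [Fintype V] [DecidableEq V] (G : SimpleGraph V) (W : ℕ → Finset V)
    (Vc : ℕ → ℕ → Finset V) (k r t : ℕ) : Prop :=
  ∀ v ∈ Vc t k, ∀ w ∈ Finset.univ \ (Finset.Icc 1 k).biUnion (Vc r),
    ¬(projSeq G W r).Adj v w

/-- `STAB(G[H])`, embedded in `ℝ^V` (coordinates outside `H` are zero). -/
def STABon [DecidableEq V] (G : SimpleGraph V) (H : Finset V) : Set (V → ℝ) :=
  convexHull ℝ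
    {x | ∃ S : Finset V, S ⊆ H ∧ IsStable G S ∧ x = fun v => if v ∈ S then (1 : ℝ) else 0}

/-! A stable set meets the clique `W` in at most one vertex, so `x_W ≤ 1` is valid for `STAB(G)`
and `F_W` is the convex hull of the stable sets meeting `W`. Each of these remains stable in `G|W`,
because every edge `uv` added to `G|W` has each vertex of `W` adjacent to `u` or `v`. The second
inclusion holds because `G|W` has more edges than `G`. -/

theorem mem_convexHull_sep_of_le_of_apply_eq {𝕜 E : Type*} [Field 𝕜] [LinearOrder 𝕜]
    [IsStrictOrderedRing 𝕜] [AddCommGroup E] [Module 𝕜 E] {f : E → 𝕜} (hf : IsLinearMap 𝕜 f)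
    {s : Set E} {c : 𝕜} (hs : ∀ y ∈ s, f y ≤ c) {x : E} (hx : x ∈ convexHull 𝕜 s)
    (hfx : f x = c) : x ∈ convexHull 𝕜 {y ∈ s | f y = c} := by
  -- `x` lies on a segment from the hull of `t` to the hull of `u`, and `f < c` at its `u` end.
  set t := {y ∈ s | f y = c}
  set u := {y ∈ s | f y < c}
  have hlt : ∀ y ∈ convexHull 𝕜 u, f y < c :=
    fun y hy => convexHull_min (fun z hz => hz.2) (convex_halfSpace_lt hf c) hy
  have hst : s = t ∪ u := by
    ext y
    simp only [t, u, Set.mem_union, Set.mem_ofPred_eq, ← and_or_left]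
    exact ⟨fun hy => ⟨hy, (hs y hy).eq_or_lt⟩, fun hy => hy.1⟩
  rw [hst] at hx
  rcases t.eq_empty_or_nonempty with ht | ht
  · rw [ht, Set.empty_union] at hx
    exact absurd hfx (hlt x hx).ne
  rcases u.eq_empty_or_nonempty with hu | hu
  · rwa [hu, Set.union_empty] at hx
  rw [convexHull_union ht hu] at hx
  obtain ⟨a, ha, b, hb, p, q, hp, hq, hpq, rfl⟩ := mem_convexJoin.1 hx
  have hfa : f a = c :=
    convexHull_min (fun z hz => hz.2) (convex_hyperplane hf c) ha
  have hq0 : q = 0 := by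
    rw [hf.map_add, hf.map_smul, hf.map_smul, hfa, smul_eq_mul, smul_eq_mul] at hfx
    have h : q * (c - f b) = 0 := by linear_combination c * hpq - hfx
    exact (mul_eq_zero.1 h).resolve_right (sub_pos.2 (hlt b hb)).ne'
  rwa [hq0, zero_smul, add_zero, (by linarith : p = 1), one_smul]

theorem IsStable.anti {G H : SimpleGraph V} (hGH : G ≤ H) {S : Finset V} (hS : IsStable H S) :
    IsStable G S :=
  fun u hu v hv huv => hS u hu v hv (hGH huv)

theorem stableVecs_anti [DecidableEq V] {G H : SimpleGraph V} (hGH : G ≤ H) :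
    stableVecs H ⊆ stableVecs G :=
  fun _ ⟨S, hS, hx⟩ => ⟨S, hS.anti hGH, hx⟩

theorem STAB_anti [DecidableEq V] {G H : SimpleGraph V} (hGH : G ≤ H) : STAB H ⊆ STAB G :=
  convexHull_mono (stableVecs_anti hGH)

theorem le_cliqueProj (G : SimpleGraph V) (W : Finset V) : G ≤ cliqueProj G W :=
  fun _ _ h => Or.inl h

theorem IsStable.cliqueProj {G : SimpleGraph V} {W S : Finset V} (hS : IsStable G S) {w : V}
    (hwW : w ∈ W) (hwS : w ∈ S) : IsStable (cliqueProj G W) S := by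
  rintro u hu v hv (huv | ⟨-, -, hW⟩)
  · exact hS u hu v hv huv
  · rcases hW w hwW with hwu | hwv
    · exact hS w hwS u hu hwu
    · exact hS w hwS v hv hwv

theorem card_inter_le_one_of_isClique [DecidableEq V] {G : SimpleGraph V} {W S : Finset V}
    (hW : G.IsClique (W : Set V)) (hS : IsStable G S) : #(W ∩ S) ≤ 1 :=
  card_le_one.2 fun a ha b hb => by
    rw [mem_inter] at ha hb
    by_contra hab
    exact hS a ha.2 b hb.2 (hW ha.1 hb.1 hab)

theorem isLinearMap_vsum (W : Finset V) : IsLinearMap ℝ (vsum W) where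
  map_add _ _ := sum_add_distrib
  map_smul c x := (mul_sum W x c).symm

theorem vsum_indicator [DecidableEq V] (W S : Finset V) :
    vsum W (fun v => if v ∈ S then (1 : ℝ) else 0) = #(W ∩ S) := by
  simp [vsum, sum_ite_mem]

theorem stmt0_general {V : Type*} [DecidableEq V] (G : SimpleGraph V)
    (W : Finset V) (hW : G.IsClique (W : Set V)) :
    {x ∈ STAB G | vsum W x = 1} ⊆ STAB (cliqueProj G W) ∧
      STAB (cliqueProj G W) ⊆ STAB G := by
  refine ⟨?_, STAB_anti (le_cliqueProj G W)⟩
  rintro x ⟨hx, hxW⟩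
  have hle : ∀ y ∈ stableVecs G, vsum W y ≤ 1 := by
    rintro _ ⟨S, hS, rfl⟩
    rw [vsum_indicator]
    exact_mod_cast card_inter_le_one_of_isClique hW hS
  refine convexHull_mono ?_ (mem_convexHull_sep_of_le_of_apply_eq (isLinearMap_vsum W) hle hx hxW)
  rintro _ ⟨⟨S, hS, rfl⟩, hSW⟩
  rw [vsum_indicator, Nat.cast_eq_one, card_eq_one] at hSW
  obtain ⟨w, hw⟩ := hSW
  obtain ⟨hwW, hwS⟩ := mem_inter.1 (hw ▸ mem_singleton_self w)
  exact ⟨S, hS.cliqueProj hwW hwS, rfl⟩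

/-- For a clique `W` of `G` with `|W| ≥ 2`,
`F_W = {x ∈ STAB(G) : x_W = 1} ⊆ STAB(G|W) ⊆ STAB(G)`. -/
theorem stmt0 {V : Type*} [Fintype V] [DecidableEq V] (G : SimpleGraph V)
    (W : Finset V) (hW : G.IsClique (W : Set V)) (hcard : 2 ≤ W.card) :
    {x ∈ STAB G | vsum W x = 1} ⊆ STAB (cliqueProj G W) ∧
      STAB (cliqueProj G W) ⊆ STAB G :=
  stmt0_general G W hW
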